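/- arXiv:2501.17490 — 2 statements merged into one kernel-verified Lean document; each statement's English description precedes it below -/
import Mathlib

section
/- Define, for fixed real parameters κ > 0, Λ > 0, ρ ∈ [−1,1] and z ∈ ℝ (viewed in ℂ), c = κ − izρΛ, d = √(c² + z(i+z)Λ²), g = (c−d)/(c+d). Then the function B(τ) = ((c−d)/Λ²)·(1 − e^{−dτ})/(1 − g e^{−dτ}) satisfies the Riccati ODE B'(τ) = (Λ²/2)B(τ)² − c·B(τ) − z(i+z)/2 with initial condition B(0) = 0, for all τ ≥ 0 at which 1 − g e^{−dτ} ≠ 0. -/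
open Complex

/-!
With `E(τ) = e^{-dτ}` we have `E' = -dE`, so `B = ((c-d)/Λ²)(1-E)/(1-gE)` has derivative
`((c-d)/Λ²) d(1-g)E/(1-gE)²`. After clearing `(1-gE)²` the Riccati equation is a polynomial
identity in `E`: writing `s = c+d`, the relation `g s = c-d` gives `2c = s(1+g)`, `2d = s(1-g)`
and `z(i+z)Λ² = d² - c² = -g s²`, after which it reduces to
`g(1-E)² - (1+g)(1-E)(1-gE) + (1-gE)² = (1-g)²E`.
-/

noncomputable def riccatiSolution (α c d g : ℂ) (τ : ℝ) : ℂ :=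
  (c - d) / α * (1 - exp (-d * τ)) / (1 - g * exp (-d * τ))

lemma hasDerivAt_cexp_neg_mul_ofReal (d : ℂ) (τ : ℝ) :
    HasDerivAt (fun t : ℝ => exp (-d * t)) (-d * exp (-d * τ)) τ := by
  have h := ((hasDerivAt_id (τ : ℂ)).const_mul (-d)).cexp
  simp only [id, mul_one] at h
  simpa only [mul_comm] using h.comp_ofReal

lemma riccatiSolution_zero (α c d g : ℂ) : riccatiSolution α c d g 0 = 0 := by
  simp [riccatiSolution]

lemma hasDerivAt_riccatiSolution (α c d g : ℂ) {τ : ℝ} (hden : 1 - g * exp (-d * τ) ≠ 0) :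
    HasDerivAt (riccatiSolution α c d g)
      ((c - d) / α * (d * (1 - g) * exp (-d * τ)) / (1 - g * exp (-d * τ)) ^ 2) τ := by
  have hE := hasDerivAt_cexp_neg_mul_ofReal d τ
  have hnum := (hE.const_sub 1).const_mul ((c - d) / α)
  have hquot := hnum.div (hE.const_mul g |>.const_sub 1) hden
  exact hquot.congr_deriv (by ring)

lemma riccati_rhs_eq_of_sq_eq {α c d g q E : ℂ} (hα : α ≠ 0) (hd : d ^ 2 = c ^ 2 + q * α)
    (hg : g * (c + d) = c - d) (hden : 1 - g * E ≠ 0) :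
    (c - d) / α * (d * (1 - g) * E) / (1 - g * E) ^ 2 =
      α / 2 * ((c - d) / α * (1 - E) / (1 - g * E)) ^ 2
        - c * ((c - d) / α * (1 - E) / (1 - g * E)) - q / 2 := by
  field_simp
  linear_combination -(1 - g * E) ^ 2 * hd
    + (c - d) * ((1 - E) ^ 2 - (1 - E) * (1 - g * E) + E * (1 - g)) * hg

theorem riccatiSolution_solves_riccati {α c d g q : ℂ} (hα : α ≠ 0)
    (hd : d ^ 2 = c ^ 2 + q * α) (hg : g * (c + d) = c - d) {τ : ℝ}
    (hden : 1 - g * exp (-d * τ) ≠ 0) :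
    HasDerivAt (riccatiSolution α c d g)
      (α / 2 * riccatiSolution α c d g τ ^ 2 - c * riccatiSolution α c d g τ - q / 2) τ := by
  rw [riccatiSolution, ← riccati_rhs_eq_of_sq_eq hα hd hg hden]
  exact hasDerivAt_riccatiSolution α c d g hden

theorem heston_riccati_B_general (Λ z : ℝ) (hΛ : 0 < Λ)
    (c d g : ℂ)
    (hd : d ^ 2 = c ^ 2 + z * (I + z) * (Λ : ℂ) ^ 2)
    (hcd : c + d ≠ 0) (hg : g = (c - d) / (c + d))
    (B : ℝ → ℂ)
    (hB : B = fun τ : ℝ =>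
      ((c - d) / (Λ : ℂ) ^ 2) * (1 - Complex.exp (-d * τ)) /
        (1 - g * Complex.exp (-d * τ))) :
    B 0 = 0 ∧
    ∀ τ : ℝ, 0 ≤ τ → 1 - g * Complex.exp (-d * τ) ≠ 0 →
      HasDerivAt B
        ((Λ : ℂ) ^ 2 / 2 * (B τ) ^ 2 - c * B τ - z * (I + z) / 2) τ := by
  have hB' : B = riccatiSolution ((Λ : ℂ) ^ 2) c d g := hB
  have hα : (Λ : ℂ) ^ 2 ≠ 0 := pow_ne_zero 2 (ofReal_ne_zero.mpr hΛ.ne')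
  have hg' : g * (c + d) = c - d := by rw [hg, div_mul_cancel₀ _ hcd]
  subst hB'
  exact ⟨riccatiSolution_zero _ c d g,
    fun _ _ hden => riccatiSolution_solves_riccati hα hd hg' hden⟩

/-- Heston Riccati verification: with `c = κ − izρΛ`, `d` a square root of
`c² + z(i+z)Λ²`, `g = (c−d)/(c+d)`, the function
`B(τ) = ((c−d)/Λ²)(1 − e^{−dτ})/(1 − g e^{−dτ})` satisfies `B(0) = 0` and
`B'(τ) = (Λ²/2)B(τ)² − cB(τ) − z(i+z)/2` at every `τ ≥ 0` where
`1 − g e^{−dτ} ≠ 0`. -/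
theorem heston_riccati_B (κ Λ ρ z : ℝ) (hκ : 0 < κ) (hΛ : 0 < Λ)
    (hρ : ρ ∈ Set.Icc (-1 : ℝ) 1)
    (c d g : ℂ) (hc : c = (κ : ℂ) - I * z * ρ * Λ)
    (hd : d ^ 2 = c ^ 2 + z * (I + z) * (Λ : ℂ) ^ 2)
    (hcd : c + d ≠ 0) (hg : g = (c - d) / (c + d))
    (B : ℝ → ℂ)
    (hB : B = fun τ : ℝ =>
      ((c - d) / (Λ : ℂ) ^ 2) * (1 - Complex.exp (-d * τ)) /
        (1 - g * Complex.exp (-d * τ))) :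
    B 0 = 0 ∧
    ∀ τ : ℝ, 0 ≤ τ → 1 - g * Complex.exp (-d * τ) ≠ 0 →
      HasDerivAt B
        ((Λ : ℂ) ^ 2 / 2 * (B τ) ^ 2 - c * B τ - z * (I + z) / 2) τ :=
  heston_riccati_B_general Λ z hΛ c d g hd hcd hg B hB
end

section
/- With c, d, g, B(τ) as in the Heston Riccati solution (c = κ − izρΛ, d = √(c² + z(i+z)Λ²), g = (c−d)/(c+d), B(τ) = ((c−d)/Λ²)(1 − e^{−dτ})/(1 − g e^{−dτ})), the function A(τ) = (κω/Λ²)[(c−d)τ − 2 log((1 − g e^{−dτ})/(1 − g))] satisfies A'(τ) = κω·B(τ) with A(0) = 0, for τ in an interval where 1 − g e^{−dτ} stays in a simply connected domain avoiding 0 so that the complex logarithm is well defined and differentiable. -/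
open Complex

/-
Write `E = e^{-dτ}`. The derivative of `A` is `κω/Λ²` times `(c - d) - 2 f'/f` with
`f = 1 - g E`, and `f'/f = g d E / (1 - g E)`. Since `g (c + d) = c - d`, the numerator
`(c - d)(1 - g E) - 2 g d E` collapses to `(c - d)(1 - E)`,
and `(c - d)(1 - E) / (1 - g E) = Λ² B(τ)`.
-/

lemma ne_zero_of_div_mem_slitPlane {a b : ℂ} (h : a / b ∈ slitPlane) : a ≠ 0 ∧ b ≠ 0 := by
  constructor <;> rintro rfl <;> simp at h

lemma hasDerivAt_cexp_mul_ofReal (d : ℂ) (τ : ℝ) :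
    HasDerivAt (fun t : ℝ => exp (d * t)) (d * exp (d * τ)) τ := by
  simpa [mul_comm] using (((hasDerivAt_id (τ : ℂ)).const_mul d).cexp).comp_ofReal

lemma hasDerivAt_clog_one_sub_mul_cexp_div {g d k : ℂ} {τ : ℝ}
    (h : (1 - g * exp (-d * τ)) / k ∈ slitPlane) :
    HasDerivAt (fun t : ℝ => log ((1 - g * exp (-d * t)) / k))
      (g * d * exp (-d * τ) / (1 - g * exp (-d * τ))) τ := by
  obtain ⟨hnum, hk⟩ := ne_zero_of_div_mem_slitPlane h
  have hf : HasDerivAt (fun t : ℝ => (1 - g * exp (-d * t)) / k)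
      (g * d * exp (-d * τ) / k) τ :=
    (((hasDerivAt_cexp_mul_ofReal (-d) τ).const_mul g).const_sub 1).div_const k
      |>.congr_deriv (by ring)
  convert hf.clog_real h using 1
  field_simp

lemma sub_sub_two_mul_div_eq_mul_one_sub_div {K : Type*} [Field K] {c d g E : K}
    (hg : g * (c + d) = c - d) (hE : 1 - g * E ≠ 0) :
    c - d - 2 * (g * d * E / (1 - g * E)) = (c - d) * (1 - E) / (1 - g * E) := by
  field_simp
  linear_combination (-E) * hg

theorem heston_riccati_A_general (κ ω Λ : ℝ)
    (c d g : ℂ)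
    (hcd : c + d ≠ 0) (hg : g = (c - d) / (c + d)) (hg1 : g ≠ 1)
    (B A : ℝ → ℂ)
    (hB : B = fun τ : ℝ =>
      ((c - d) / (Λ : ℂ) ^ 2) * (1 - Complex.exp (-d * τ)) /
        (1 - g * Complex.exp (-d * τ)))
    (hA : A = fun τ : ℝ =>
      ((κ : ℂ) * ω / (Λ : ℂ) ^ 2) *
        ((c - d) * τ -
          2 * Complex.log ((1 - g * Complex.exp (-d * τ)) / (1 - g)))) :
    A 0 = 0 ∧
    ∀ τ : ℝ,
      (∀ s ∈ Set.Icc 0 τ,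
        (1 - g * Complex.exp (-d * s)) / (1 - g) ∈ Complex.slitPlane) →
      τ ∈ Set.Icc (0 : ℝ) τ →
      HasDerivAt A ((κ : ℂ) * ω * B τ) τ := by
  have hg0 : (1 : ℂ) - g ≠ 0 := sub_ne_zero.mpr hg1.symm
  refine ⟨by simp [hA, div_self hg0], fun τ hS hτ => ?_⟩
  have hslit := hS τ hτ
  have hlog := hasDerivAt_clog_one_sub_mul_cexp_div hslit
  have hlin : HasDerivAt (fun t : ℝ => (c - d) * (t : ℂ)) (c - d) τ := by
    simpa using ((hasDerivAt_id (τ : ℂ)).const_mul (c - d)).comp_ofReal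
  have hgcd : g * (c + d) = c - d := by rw [hg, div_mul_cancel₀ _ hcd]
  subst hA hB
  refine ((hlin.sub (hlog.const_mul 2)).const_mul ((κ : ℂ) * ω / (Λ : ℂ) ^ 2)).congr_deriv ?_
  rw [sub_sub_two_mul_div_eq_mul_one_sub_div hgcd (ne_zero_of_div_mem_slitPlane hslit).1]
  ring

/-- Heston coefficient `A(τ) = (κω/Λ²)[(c−d)τ − 2 log((1 − g e^{−dτ})/(1 − g))]`
satisfies `A(0) = 0` and `A'(τ) = κω B(τ)` on an interval where the argument of
the logarithm stays in the slit plane (a simply connected domain avoiding `0`),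
so that the (principal) complex logarithm is well defined and differentiable. -/
theorem heston_riccati_A (κ ω Λ ρ z : ℝ) (hκ : 0 < κ) (hω : 0 < ω) (hΛ : 0 < Λ)
    (hρ : ρ ∈ Set.Icc (-1 : ℝ) 1)
    (c d g : ℂ) (hc : c = (κ : ℂ) - I * z * ρ * Λ)
    (hd : d ^ 2 = c ^ 2 + z * (I + z) * (Λ : ℂ) ^ 2)
    (hcd : c + d ≠ 0) (hg : g = (c - d) / (c + d)) (hg1 : g ≠ 1)
    (B A : ℝ → ℂ)
    (hB : B = fun τ : ℝ =>
      ((c - d) / (Λ : ℂ) ^ 2) * (1 - Complex.exp (-d * τ)) /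
        (1 - g * Complex.exp (-d * τ)))
    (hA : A = fun τ : ℝ =>
      ((κ : ℂ) * ω / (Λ : ℂ) ^ 2) *
        ((c - d) * τ -
          2 * Complex.log ((1 - g * Complex.exp (-d * τ)) / (1 - g)))) :
    A 0 = 0 ∧
    ∀ τ : ℝ,
      (∀ s ∈ Set.Icc 0 τ,
        (1 - g * Complex.exp (-d * s)) / (1 - g) ∈ Complex.slitPlane) →
      τ ∈ Set.Icc (0 : ℝ) τ →
      HasDerivAt A ((κ : ℂ) * ω * B τ) τ :=
  heston_riccati_A_general κ ω Λ c d g hcd hg hg1 B A hB hA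
end
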